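/- Define words by w_0 = a_0 and w_ℓ = w_{ℓ−1} a_ℓ w_{ℓ−1} for ℓ ≥ 1, and let A_k be the NFA with states {0, 1, …, k}, alphabet {a_0, a_1, …, a_k}, all states initial, accepting state 0, and transitions: i·a_j = {i} whenever k ≥ i > j ≥ 0, and i·a_i = {0, 1, …, i−1} whenever k ≥ i ≥ 1. Then for every k ≥ 0, every prefix of w_k of even length belongs to L(A_k), and every prefix of w_k of odd length ends with a_0 and does not belong to L(A_k). -/

import Mathlib

/-- `subk k w` is the set of scattered subwords of `w` of length at most `k`. -/
def subk {α : Type*} (k : ℕ) (w : List α) : Set (List α) :=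
  {u | u.length ≤ k ∧ u.Sublist w}

/-- Two words are `k`-equivalent if they have the same subwords of length at most `k`. -/
def kEquiv {α : Type*} (k : ℕ) (u v : List α) : Prop :=
  subk k u = subk k v

/-- A language is `k`-piecewise testable (Simon's characterization):
`k`-equivalent words are equi-members. -/
def IsPT {α : Type*} (k : ℕ) (L : Language α) : Prop :=
  ∀ u v : List α, kEquiv k u v → (u ∈ L ↔ v ∈ L)

/-- A DFA is minimal if all states are reachable and pairwise distinguishable. -/
def IsMinimalDFA {α σ : Type*} (A : DFA α σ) : Prop :=
  (∀ q : σ, ∃ w : List α, A.eval w = q) ∧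
  ∀ p q : σ,
    (∀ w : List α, (A.evalFrom p w ∈ A.accept ↔ A.evalFrom q w ∈ A.accept)) → p = q

/-- There is a simple path (pairwise distinct states) with `m` transitions in the DFA `A`. -/
def DFAHasSimplePath {α σ : Type*} (A : DFA α σ) (m : ℕ) : Prop :=
  ∃ (qs : Fin (m + 1) → σ) (as : Fin m → α),
    Function.Injective qs ∧ ∀ i : Fin m, A.step (qs i.castSucc) (as i) = qs i.succ

/-- The depth of a DFA: the number of transitions on a longest simple path. -/
noncomputable def dfaDepth {α σ : Type*} (A : DFA α σ) : ℕ :=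
  sSup {m | DFAHasSimplePath A m}

/-- There is a simple path (pairwise distinct states) with `m` transitions in the NFA `A`. -/
def NFAHasSimplePath {α σ : Type*} (A : NFA α σ) (m : ℕ) : Prop :=
  ∃ (qs : Fin (m + 1) → σ) (as : Fin m → α),
    Function.Injective qs ∧ ∀ i : Fin m, qs i.succ ∈ A.step (qs i.castSucc) (as i)

/-- The depth of an NFA: the number of transitions on a longest simple path. -/
noncomputable def nfaDepth {α σ : Type*} (A : NFA α σ) : ℕ :=
  sSup {m | NFAHasSimplePath A m}

/-- The NFA `A_k`: states `{0,…,k}`, alphabet `{a_0,…,a_k}` (both modeled by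
`Fin (k+1)`), all states initial, accepting state `0`, with `i·a_j = {i}` for
`i > j` and `i·a_i = {0,…,i-1}` for `i ≥ 1` (no other transitions). -/
def Ak (k : ℕ) : NFA (Fin (k + 1)) (Fin (k + 1)) where
  step := fun q a =>
    if a < q then {q} else if q = a ∧ 0 < q then {p | p < q} else ∅
  start := Set.univ
  accept := {0}

/-- The words `w_ℓ`: `w_0 = a_0` and `w_ℓ = w_{ℓ-1} a_ℓ w_{ℓ-1}`, with letter `a_i`
modeled by the natural number `i`. -/
def W : ℕ → List ℕ
  | 0 => [0]
  | l + 1 => W l ++ (l + 1) :: W l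

/-- The word `w_k` viewed as a word over the `(k+1)`-letter alphabet `Fin (k+1)`
(every letter of `w_k` is at most `k`, so the map `a ↦ a % (k+1)` is the identity
on the letters of `w_k`). -/
def WFin (k : ℕ) : List (Fin (k + 1)) :=
  (W k).map (fun a => ⟨a % (k + 1), Nat.mod_lt a k.succ_pos⟩)


/-! Since `|w_ℓ|` is odd, a prefix of `w_ℓ = w_{ℓ-1} a_ℓ w_{ℓ-1}` is either a prefix of `w_{ℓ-1}`
or `w_{ℓ-1} a_ℓ r` with `r` a prefix of `w_{ℓ-1}` of the same parity. Inductively, every odd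
prefix ends with `a_0`, and no transition on `a_0` enters the accepting state `0`.

An even prefix of `w_ℓ` is accepted from some state in `{0, …, ℓ}`: either it is an even prefix
of `w_{ℓ-1}`, or it is `w_{ℓ-1} a_ℓ r` with `r` an even prefix of `w_{ℓ-1}`; in the latter case
one waits in state `ℓ` while reading `w_{ℓ-1}` (all its letters are smaller), jumps on `a_ℓ` to
any state below `ℓ`, and continues by induction. -/

theorem List.prefix_append_iff {α : Type*} {l l₁ l₂ : List α} :
    l <+: l₁ ++ l₂ ↔ l <+: l₁ ∨ ∃ t, l = l₁ ++ t ∧ t <+: l₂ := by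
  refine ⟨fun h => ?_, ?_⟩
  · obtain h₁ | ⟨t, rfl⟩ := List.prefix_or_prefix_of_prefix h (List.prefix_append l₁ l₂)
    · exact .inl h₁
    · exact .inr ⟨t, rfl, (List.prefix_append_right_inj l₁).mp h⟩
  · rintro (h | ⟨t, rfl, h⟩)
    · exact h.trans (List.prefix_append l₁ l₂)
    · exact (List.prefix_append_right_inj l₁).mpr h

theorem NFA.evalFrom_mono {α σ : Type*} (M : NFA α σ) {S T : Set σ} (h : S ⊆ T) (x : List α) :
    M.evalFrom S x ⊆ M.evalFrom T x := by
  rw [← Set.union_eq_right.mpr h, NFA.evalFrom_union]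
  exact Set.subset_union_left

section Words

theorem le_of_mem_W {l a : ℕ} (h : a ∈ W l) : a ≤ l := by
  induction l with
  | zero => simp_all [W]
  | succ l ih =>
    simp only [W, List.mem_append, List.mem_cons] at h
    rcases h with h | rfl | h <;> grind

theorem odd_length_W (l : ℕ) : Odd (W l).length := by
  cases l <;> simp [W]

theorem prefix_W_succ {l : ℕ} {p : List ℕ} (h : p <+: W (l + 1)) :
    p <+: W l ∨ ∃ r, p = W l ++ (l + 1) :: r ∧ r <+: W l := by
  obtain h | ⟨t, rfl, ht⟩ := List.prefix_append_iff.mp h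
  · exact .inl h
  · obtain rfl | ⟨r, rfl, hr⟩ := List.prefix_cons_iff.mp ht
    · exact .inl (by simp)
    · exact .inr ⟨r, rfl, hr⟩

theorem even_length_append_W_iff {l : ℕ} (r : List ℕ) :
    Even (W l ++ (l + 1) :: r).length ↔ Even r.length := by
  obtain ⟨m, hm⟩ := odd_length_W l
  rw [List.length_append, List.length_cons, hm,
    show 2 * m + 1 + (r.length + 1) = r.length + 2 * (m + 1) by ring]
  exact Nat.even_add.trans (by simp)

theorem getLast?_eq_zero_of_prefix_W {l : ℕ} {p : List ℕ} (hp : p <+: W l)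
    (ho : Odd p.length) : p.getLast? = some 0 := by
  induction l generalizing p with
  | zero =>
    obtain rfl | ⟨t, rfl, ht⟩ := List.prefix_cons_iff.mp hp
    · simp at ho
    · simp_all
  | succ l ih =>
    obtain hp | ⟨r, rfl, hr⟩ := prefix_W_succ hp
    · exact ih hp ho
    · have hr_odd : Odd r.length := by
        rwa [← Nat.not_even_iff_odd, even_length_append_W_iff, Nat.not_even_iff_odd] at ho
      simp [List.getLast?_append, List.getLast?_cons, ih hr hr_odd]

end Words

section Automaton

variable {k : ℕ}

theorem Ak_step_of_lt {q a : Fin (k + 1)} (h : a < q) : (Ak k).step q a = {q} := by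
  simp [Ak, h]

theorem Ak_step_self {q : Fin (k + 1)} (h : 0 < q) : (Ak k).step q q = {p | p < q} := by
  simp [Ak, h]

theorem zero_notMem_Ak_step_zero (q : Fin (k + 1)) : 0 ∉ (Ak k).step q 0 := by
  simp only [Ak]
  split_ifs with h₁ h₂
  · exact h₁.ne
  · exact fun h => h₂.2.ne' h₂.1
  · exact id

theorem mem_Ak_evalFrom_of_forall_lt {q : Fin (k + 1)} {S : Set (Fin (k + 1))} (hq : q ∈ S)
    {x : List (Fin (k + 1))} (hx : ∀ a ∈ x, a < q) : q ∈ (Ak k).evalFrom S x := by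
  induction x generalizing S with
  | nil => exact hq
  | cons a x ih =>
    refine ih ?_ fun b hb => hx b (List.mem_cons_of_mem a hb)
    exact (NFA.mem_stepSet ..).mpr ⟨q, hq, by simp [Ak_step_of_lt (hx a List.mem_cons_self)]⟩

theorem notMem_Ak_accepts_of_getLast?_eq_zero {x : List (Fin (k + 1))}
    (h : x.getLast? = some 0) : x ∉ (Ak k).accepts := by
  obtain ⟨y, rfl⟩ := List.getLast?_eq_some_iff.mp h
  rintro ⟨s, rfl, hs⟩
  rw [NFA.eval, NFA.evalFrom_append, NFA.evalFrom_singleton, NFA.mem_stepSet] at hs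
  obtain ⟨q, -, hq⟩ := hs
  exact zero_notMem_Ak_step_zero q hq

theorem val_ofNat_of_le {a : ℕ} (h : a ≤ k) : (Fin.ofNat (k + 1) a : ℕ) = a := by
  rw [Fin.val_ofNat, Nat.mod_eq_of_lt (Nat.lt_succ_of_le h)]

theorem zero_mem_Ak_evalFrom_of_prefix_W {l : ℕ} (hl : l ≤ k) {p : List ℕ} (hp : p <+: W l)
    (he : Even p.length) :
    0 ∈ (Ak k).evalFrom {q | q.val ≤ l} (p.map (Fin.ofNat (k + 1))) := by
  induction l generalizing p with
  | zero =>
    obtain rfl | ⟨t, rfl, ht⟩ := List.prefix_cons_iff.mp hp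
    · simp
    · simp_all
  | succ l ih =>
    have hmono : {q : Fin (k + 1) | q.val ≤ l} ⊆ {q | q.val ≤ l + 1} :=
      fun q hq => Nat.le_succ_of_le hq
    obtain hp | ⟨r, rfl, hr⟩ := prefix_W_succ hp
    · exact NFA.evalFrom_mono _ hmono _ (ih (by omega) hp he)
    · have ha : (Fin.ofNat (k + 1) (l + 1)).val = l + 1 := val_ofNat_of_le hl
      have hwait : Fin.ofNat (k + 1) (l + 1) ∈
          (Ak k).evalFrom {q | q.val ≤ l + 1} ((W l).map (Fin.ofNat (k + 1))) := by
        refine mem_Ak_evalFrom_of_forall_lt ha.le fun b hb => ?_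
        obtain ⟨c, hc, rfl⟩ := List.mem_map.mp hb
        have := le_of_mem_W hc
        rw [Fin.lt_def, ha, val_ofNat_of_le (by omega)]
        omega
      have hjump : {q : Fin (k + 1) | q.val ≤ l} ⊆
          (Ak k).stepSet ((Ak k).evalFrom {q | q.val ≤ l + 1} ((W l).map (Fin.ofNat (k + 1))))
            (Fin.ofNat (k + 1) (l + 1)) := by
        intro q hq
        have hq' : q.val ≤ l := hq
        refine (NFA.mem_stepSet ..).mpr ⟨_, hwait, ?_⟩
        rw [Ak_step_self (by rw [Fin.lt_def, Fin.val_zero, ha]; omega)]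
        exact Fin.lt_def.mpr (by omega)
      rw [List.map_append, List.map_cons, NFA.evalFrom_append, NFA.evalFrom_cons]
      exact NFA.evalFrom_mono _ hjump _
        (ih (by omega) hr ((even_length_append_W_iff r).mp he))

end Automaton

theorem stmt14 (k : ℕ) :
    ∀ p : List (Fin (k + 1)), p <+: WFin k →
      (Even p.length → p ∈ (Ak k).accepts) ∧
      (Odd p.length → p.getLast? = some 0 ∧ p ∉ (Ak k).accepts) := by
  intro p hp
  obtain ⟨u, hu, rfl⟩ := List.prefix_map_iff.mp (show _ <+: (W k).map (Fin.ofNat (k + 1)) from hp)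
  rw [List.length_map]
  refine ⟨fun he => ⟨0, rfl, ?_⟩, fun ho => ?_⟩
  · have hstart : {q : Fin (k + 1) | q.val ≤ k} = (Ak k).start :=
      Set.eq_univ_of_forall fun q => Nat.lt_succ_iff.mp q.isLt
    rw [NFA.eval, ← hstart]
    exact zero_mem_Ak_evalFrom_of_prefix_W le_rfl hu he
  · have hlast : (u.map (Fin.ofNat (k + 1))).getLast? = some 0 := by
      rw [List.getLast?_map, getLast?_eq_zero_of_prefix_W hu ho]
      rfl
    exact ⟨hlast, notMem_Ak_accepts_of_getLast?_eq_zero hlast⟩
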